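/- Let ξ, z₁ ∈ ℝ with z₁ ≥ 0. Define R(z) := (z − z₁)^(1/2) · (z + z₁)^(1/2) with principal branches and g₀(z) := (4z² + 12ξ + 2z₁²) · R(z). Then g₀(z) − (4z³ + 12ξ z) tends to 0 along the filter of complex numbers z with |z| → ∞ (the comap of atTop under the modulus); i.e. the genus-zero g-function satisfies g₀(ξ;z) = θ(ξ;z) + O(z⁻¹) as z → ∞, where θ(ξ;z) = 4z³ + 12ξz. -/

import Mathlib

open Complex Filter

/-- The branch `R(z) = (z − z₁)^{1/2}(z + z₁)^{1/2}` of `(z² − z₁²)^{1/2}`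
cut along `[−z₁, z₁]` (principal branches). -/
noncomputable def Rg (z₁ : ℝ) (z : ℂ) : ℂ :=
  (z - (z₁ : ℂ)) ^ ((1 : ℂ) / 2) * (z + (z₁ : ℂ)) ^ ((1 : ℂ) / 2)

/-- The genus-zero g-function `g₀(ξ;z) = (4z² + 12ξ + 2z₁²)·R(z)`. -/
noncomputable def g0 (ξ z₁ : ℝ) (z : ℂ) : ℂ :=
  (4 * z ^ 2 + 12 * (ξ : ℂ) + 2 * (z₁ : ℂ) ^ 2) * Rg z₁ z

lemma re_half_cpow_nonneg (w : ℂ) : 0 ≤ (w ^ ((1:ℂ)/2)).re := by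
  rcases eq_or_ne w 0 with h | h
  · simp [h, zero_cpow (by norm_num : ((1:ℂ)/2) ≠ 0)]
  · rw [cpow_def_of_ne_zero h, exp_re]
    apply mul_nonneg (Real.exp_pos _).le
    apply Real.cos_nonneg_of_mem_Icc
    constructor
    · simp only [mul_im, log_im, log_re]
      norm_num
      nlinarith [neg_pi_lt_arg w, Real.pi_pos]
    · simp only [mul_im, log_im, log_re]
      norm_num
      nlinarith [arg_le_pi w, Real.pi_pos]

lemma im_half_cpow_nonneg (w : ℂ) (h : 0 ≤ w.im) : 0 ≤ (w ^ ((1:ℂ)/2)).im := by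
  rcases eq_or_ne w 0 with h0 | h0
  · simp [h0, zero_cpow (by norm_num : ((1:ℂ)/2) ≠ 0)]
  · rw [cpow_def_of_ne_zero h0, exp_im]
    apply mul_nonneg (Real.exp_pos _).le
    apply Real.sin_nonneg_of_nonneg_of_le_pi
    · simp only [mul_im, log_im, log_re]
      norm_num
      nlinarith [arg_nonneg_iff.mpr h]
    · simp only [mul_im, log_im, log_re]
      norm_num
      nlinarith [arg_le_pi w, Real.pi_pos]

lemma im_half_cpow_nonpos (w : ℂ) (h : w.im < 0) : (w ^ ((1:ℂ)/2)).im ≤ 0 := by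
  have h0 : w ≠ 0 := by intro hc; rw [hc] at h; simp at h
  rw [cpow_def_of_ne_zero h0, exp_im]
  apply mul_nonpos_of_nonneg_of_nonpos (Real.exp_pos _).le
  have harg : arg w < 0 := arg_neg_iff.mpr h
  have hgt : -Real.pi < arg w := neg_pi_lt_arg w
  have hx : (Complex.log w * ((1:ℂ)/2)).im = arg w / 2 := by
    simp only [mul_im, log_im, log_re]; norm_num; ring
  rw [hx]
  have := Real.sin_nonneg_of_nonneg_of_le_pi (x := -(arg w / 2))
    (by linarith) (by nlinarith [Real.pi_pos])
  rw [Real.sin_neg] at this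
  linarith

lemma mul_self_half_cpow (w : ℂ) (h : w ≠ 0) : w ^ ((1:ℂ)/2) * w ^ ((1:ℂ)/2) = w := by
  rw [← cpow_add _ _ h]
  norm_num

lemma key_estimate (ξ z₁ : ℝ) (hz₁ : 0 ≤ z₁) (z : ℂ) (hz : 2*z₁ + 1 ≤ ‖z‖) :
    ‖g0 ξ z₁ z - (4 * z ^ 3 + 12 * (ξ : ℂ) * z)‖
      ≤ z₁^2 * (6*z₁^2 + 12*|ξ|) / (‖z‖ - z₁) := by
  have hz1lt : z₁ < ‖z‖ := by linarith
  have habs_z1 : ‖((z₁ : ℝ) : ℂ)‖ = z₁ := by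
    rw [Complex.norm_real, Real.norm_eq_abs, _root_.abs_of_nonneg hz₁]
  have hne1 : z - (z₁:ℂ) ≠ 0 := by
    intro h
    rw [sub_eq_zero] at h
    rw [h, habs_z1] at hz1lt
    exact lt_irrefl _ hz1lt
  have hne2 : z + (z₁:ℂ) ≠ 0 := by
    intro h
    have : z = -(z₁:ℂ) := by linear_combination h
    rw [this, norm_neg, habs_z1] at hz1lt
    exact lt_irrefl _ hz1lt
  set A : ℂ := (z - (z₁:ℂ)) ^ ((1:ℂ)/2) with hAdef
  set B : ℂ := (z + (z₁:ℂ)) ^ ((1:ℂ)/2) with hBdef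
  have hA : A * A = z - (z₁:ℂ) := mul_self_half_cpow _ hne1
  have hB : B * B = z + (z₁:ℂ) := mul_self_half_cpow _ hne2
  set u : ℂ := A * B + z with hudef
  have huu : 2 * u = (A + B) * (A + B) := by
    rw [hudef]; linear_combination -hA - hB
  -- lower bounds on |A|², |B|²
  have hAl : ‖z‖ - z₁ ≤ ‖A‖ ^ 2 := by
    have h1 : ‖A‖ ^ 2 = ‖z - (z₁:ℂ)‖ := by
      rw [sq, ← norm_mul, hA]
    have h2 : ‖z‖ - z₁ ≤ ‖z - (z₁:ℂ)‖ := by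
      have := norm_sub_norm_le z ((z₁:ℝ):ℂ)
      simpa [habs_z1, _root_.abs_of_nonneg hz₁] using this
    rw [h1]; linarith
  have hBl : ‖z‖ - z₁ ≤ ‖B‖ ^ 2 := by
    have h1 : ‖B‖ ^ 2 = ‖z + (z₁:ℂ)‖ := by
      rw [sq, ← norm_mul, hB]
    have h2 : ‖z‖ - z₁ ≤ ‖z + (z₁:ℂ)‖ := by
      have := norm_sub_norm_le z (-((z₁:ℝ):ℂ))
      simpa [habs_z1, sub_neg_eq_add, _root_.abs_of_nonneg hz₁] using this
    rw [h1]; linarith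
  -- sign information
  have hAre : 0 ≤ A.re := re_half_cpow_nonneg _
  have hBre : 0 ≤ B.re := re_half_cpow_nonneg _
  have hImprod : 0 ≤ A.im * B.im := by
    rcases le_or_gt 0 z.im with him | him
    · have h1 : 0 ≤ (z - (z₁:ℂ)).im := by simpa using him
      have h2 : 0 ≤ (z + (z₁:ℂ)).im := by simpa using him
      exact mul_nonneg (im_half_cpow_nonneg _ h1) (im_half_cpow_nonneg _ h2)
    · have h1 : (z - (z₁:ℂ)).im < 0 := by simpa using him
      have h2 : (z + (z₁:ℂ)).im < 0 := by simpa using him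
      nlinarith [im_half_cpow_nonpos _ h1, im_half_cpow_nonpos _ h2]
  -- |A+B|² ≥ |A|² + |B|²
  have hABsq : ‖A‖ ^ 2 + ‖B‖ ^ 2 ≤ ‖A + B‖ ^ 2 := by
    rw [Complex.sq_norm, Complex.sq_norm, Complex.sq_norm]
    have : Complex.normSq (A + B)
        = Complex.normSq A + Complex.normSq B + 2 * (A.re * B.re + A.im * B.im) := by
      simp only [Complex.normSq_apply, Complex.add_re, Complex.add_im]
      ring
    rw [this]
    nlinarith [mul_nonneg hAre hBre]
  -- |u| ≥ |z| - z₁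
  have habsu : ‖z‖ - z₁ ≤ ‖u‖ := by
    have h1 : ‖2 * u‖ = 2 * ‖u‖ := by
      rw [norm_mul, Complex.norm_two]
    have h2 : ‖2 * u‖ = ‖A + B‖ ^ 2 := by
      rw [huu, norm_mul, sq]
    nlinarith
  have hupos : 0 < ‖u‖ := by linarith
  have hu0 : u ≠ 0 := by
    intro h; rw [h] at hupos; simp at hupos
  -- the key algebraic identity
  have hq : (A * B) * (A * B) = z^2 - (z₁:ℂ)^2 := by
    linear_combination (B*B) * hA + (z - (z₁:ℂ)) * hB
  have hg0eq : g0 ξ z₁ z = (4 * z ^ 2 + 12 * (ξ : ℂ) + 2 * (z₁ : ℂ) ^ 2) * (A * B) := by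
    unfold g0 Rg
    rw [← hAdef, ← hBdef]
  clear_value A B u
  have hE : (g0 ξ z₁ z - (4 * z ^ 3 + 12 * (ξ : ℂ) * z)) * (u * u)
      = -(z₁:ℂ)^2 * (2*z*(z₁:ℂ)^2 + (12*(ξ:ℂ) + 2*(z₁:ℂ)^2) * u) := by
    rw [hg0eq, hudef]
    linear_combination (4*(A*B)*z^2 + 12*(A*B)*(ξ:ℂ) + 2*(A*B)*(z₁:ℂ)^2
      + 4*z^3 + 12*z*(ξ:ℂ) + 4*z*(z₁:ℂ)^2) * hq
  -- pass to absolute values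
  have habs_eq : ‖g0 ξ z₁ z - (4 * z ^ 3 + 12 * (ξ : ℂ) * z)‖
      = ‖-(z₁:ℂ)^2 * (2*z*(z₁:ℂ)^2 + (12*(ξ:ℂ) + 2*(z₁:ℂ)^2) * u)‖
        / (‖u‖ * ‖u‖) := by
    rw [← hE, norm_mul, norm_mul]
    field_simp
  rw [habs_eq]
  -- numerator estimate
  have hnum : ‖-(z₁:ℂ)^2 * (2*z*(z₁:ℂ)^2 + (12*(ξ:ℂ) + 2*(z₁:ℂ)^2) * u)‖
      ≤ z₁^2 * (6*z₁^2 + 12*|ξ|) * ‖u‖ := by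
    rw [norm_mul]
    have h1 : ‖-(z₁:ℂ)^2‖ = z₁^2 := by
      rw [norm_neg, norm_pow, habs_z1]
    rw [h1]
    have h2 : ‖2*z*(z₁:ℂ)^2 + (12*(ξ:ℂ) + 2*(z₁:ℂ)^2) * u‖
        ≤ ‖2*z*(z₁:ℂ)^2‖ + ‖(12*(ξ:ℂ) + 2*(z₁:ℂ)^2) * u‖ :=
      norm_add_le _ _
    have h3 : ‖2*z*(z₁:ℂ)^2‖ = 2 * ‖z‖ * z₁^2 := by
      rw [norm_mul, norm_mul, norm_pow, Complex.norm_two, habs_z1]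
    have h4 : ‖(12*(ξ:ℂ) + 2*(z₁:ℂ)^2) * u‖
        ≤ (12*|ξ| + 2*z₁^2) * ‖u‖ := by
      rw [norm_mul]
      apply mul_le_mul_of_nonneg_right _ (norm_nonneg u)
      have : (12*(ξ:ℂ) + 2*(z₁:ℂ)^2) = ((12*ξ + 2*z₁^2 : ℝ) : ℂ) := by push_cast; ring
      rw [this, Complex.norm_real, Real.norm_eq_abs]
      calc |12*ξ + 2*z₁^2| ≤ |12*ξ| + |2*z₁^2| := abs_add_le _ _
        _ = 12*|ξ| + 2*z₁^2 := by
            rw [abs_mul, abs_mul, _root_.abs_pow]; norm_num [_root_.abs_of_nonneg hz₁]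
    -- |z| ≤ 2(|z| - z₁) ≤ 2|u|
    have hz2 : ‖z‖ ≤ 2 * ‖u‖ := by
      nlinarith
    have hsum : ‖2*z*(z₁:ℂ)^2 + (12*(ξ:ℂ) + 2*(z₁:ℂ)^2) * u‖
        ≤ 2 * ‖z‖ * z₁^2 + (12*|ξ| + 2*z₁^2) * ‖u‖ := by
      rw [h3] at h2; linarith
    have e1 := mul_le_mul_of_nonneg_left hsum (sq_nonneg z₁)
    have e2 : 2 * ‖z‖ * z₁^2 ≤ 4 * ‖u‖ * z₁^2 := by
      nlinarith [hz2, sq_nonneg z₁]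
    have e3 := mul_le_mul_of_nonneg_left e2 (sq_nonneg z₁)
    linarith [e1, e3]
  -- final chain
  have hKnn : 0 ≤ z₁^2 * (6*z₁^2 + 12*|ξ|) := by positivity
  calc ‖-(z₁:ℂ)^2 * (2*z*(z₁:ℂ)^2 + (12*(ξ:ℂ) + 2*(z₁:ℂ)^2) * u)‖
        / (‖u‖ * ‖u‖)
      ≤ (z₁^2 * (6*z₁^2 + 12*|ξ|) * ‖u‖) / (‖u‖ * ‖u‖) := by
        apply div_le_div_of_nonneg_right hnum (by positivity)
    _ = z₁^2 * (6*z₁^2 + 12*|ξ|) / ‖u‖ := by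
        field_simp
    _ ≤ z₁^2 * (6*z₁^2 + 12*|ξ|) / (‖z‖ - z₁) := by
        apply div_le_div_of_nonneg_left hKnn (by linarith) habsu

/-- The genus-zero g-function matches the phase `θ(ξ;z) = 4z³ + 12ξz` at infinity:
`g₀(ξ;z) − θ(ξ;z) → 0` as `|z| → ∞`, i.e. `g₀ = θ + O(z⁻¹)`. -/
theorem g0_matches_theta_at_infinity (ξ z₁ : ℝ) (hz₁ : 0 ≤ z₁) :
    Tendsto (fun z : ℂ => g0 ξ z₁ z - (4 * z ^ 3 + 12 * (ξ : ℂ) * z))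
      (comap (fun z : ℂ => ‖z‖) atTop) (nhds 0) := by
  have htends : Tendsto (fun z : ℂ => z₁^2 * (6*z₁^2 + 12*|ξ|) / (‖z‖ - z₁))
      (comap (fun z : ℂ => ‖z‖) atTop) (nhds 0) := by
    have h1 : Tendsto (fun z : ℂ => ‖z‖) (comap (fun z : ℂ => ‖z‖) atTop) atTop := tendsto_comap
    have h2 : Tendsto (fun t : ℝ => t - z₁) atTop atTop :=
      tendsto_atTop_add_const_right atTop (-z₁) tendsto_id
    exact Tendsto.div_atTop tendsto_const_nhds (h2.comp h1)
  apply squeeze_zero_norm' _ htends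
  have hev : ∀ᶠ z : ℂ in comap (fun z : ℂ => ‖z‖) atTop, 2*z₁ + 1 ≤ ‖z‖ :=
    tendsto_comap.eventually (eventually_ge_atTop (2*z₁ + 1))
  filter_upwards [hev] with z hz
  exact key_estimate ξ z₁ hz₁ z hz
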